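/- For t a fixed positive integer, the two-variable function L̃₀(ρ,k,t), defined for real k > 0 and 1 < ρ < t, has partial derivatives ∂L̃₀/∂k = (ρ−1)/k and ∂L̃₀/∂ρ = log(ρk) − y_t(ρ). -/

import Mathlib

open Filter Real

/-- `d_i = 2^C(i,2) i!`. -/
noncomputable def dI (i : ℕ) : ℝ := 2 ^ i.choose 2 * (i.factorial : ℝ)

/-- `P̃_{ρ,t}`: the set of `(p_1,…,p_t) ∈ [0,1]^t` with `Σ p_i = 1` and `Σ i p_i = ρ`
(index `i : Fin t` denotes size `i+1`). -/
def Ptilde (ρ : ℝ) (t : ℕ) : Set (Fin t → ℝ) :=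
  {q | (∀ i, q i ∈ Set.Icc (0 : ℝ) 1) ∧ (∑ i, q i) = 1 ∧
    (∑ i, ((i.1 + 1 : ℕ) : ℝ) * q i) = ρ}

/-- `L̃(ρ,k,p) = ρ log(ρk) − log k − ρ + 1 − Σ p_i log(p_i d_i)`. -/
noncomputable def Ltilde (ρ k : ℝ) {t : ℕ} (q : Fin t → ℝ) : ℝ :=
  ρ * Real.log (ρ * k) - Real.log k - ρ + 1 -
    ∑ i, q i * Real.log (q i * dI (i.1 + 1))

/-- `L̃₀(ρ,k,t) = sup {L̃(ρ,k,p) : p ∈ P̃_{ρ,t}}`. -/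
noncomputable def Ltilde0 (ρ k : ℝ) (t : ℕ) : ℝ :=
  sSup {L : ℝ | ∃ q ∈ Ptilde ρ t, L = Ltilde ρ k q}

/-- `L̂₀(n,k,t) = L̃₀(n/k, k, t)`. -/
noncomputable def Lhat0 (n k : ℝ) (t : ℕ) : ℝ := Ltilde0 (n / k) k t

/- ### Auxiliary lemmas -/

lemma dI_pos (n : ℕ) : 0 < dI n := by unfold dI; positivity

/-- derivative of `v ↦ v * log (v * d)` -/
lemma hasDerivAt_xlog {d u : ℝ} (hd : 0 < d) (hu : 0 < u) :
    HasDerivAt (fun v : ℝ => v * Real.log (v * d)) (Real.log (u * d) + 1) u := by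
  have h1 : HasDerivAt (fun v : ℝ => v * d) d u := hasDerivAt_mul_const d
  have hlog : HasDerivAt (fun v : ℝ => Real.log (v * d)) ((u * d)⁻¹ * d) u :=
    by have := (Real.hasDerivAt_log (mul_pos hu hd).ne').comp u h1; exact this
  have := (hasDerivAt_id u).mul hlog
  refine this.congr_deriv ?_
  field_simp
  simp only [id]
  ring

/-- squeeze lemma for derivatives -/
lemma hasDerivAt_of_squeeze {F G U : ℝ → ℝ} {a D : ℝ}
    (hG : HasDerivAt G D a) (hU : HasDerivAt U D a)
    (hGa : G a = F a) (hUa : U a = F a)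
    (h1 : ∀ᶠ r in nhds a, G r ≤ F r) (h2 : ∀ᶠ r in nhds a, F r ≤ U r) :
    HasDerivAt F D a := by
  rw [hasDerivAt_iff_isLittleO] at hG hU ⊢
  have key : ∀ᶠ r in nhds a, ‖F r - F a - (r - a) • D‖ ≤
      ‖(G r - G a - (r - a) • D)‖ + ‖(U r - U a - (r - a) • D)‖ := by
    filter_upwards [h1, h2] with r hr1 hr2
    simp only [smul_eq_mul, Real.norm_eq_abs]
    rw [abs_le]
    constructor
    · have : -(|G r - G a - (r - a) * D|) ≤ G r - G a - (r - a) * D := neg_abs_le _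
      have h3 : G r - G a - (r - a) * D ≤ F r - F a - (r - a) * D := by
        rw [hGa]; linarith
      have h4 : (0:ℝ) ≤ |U r - U a - (r - a) * D| := abs_nonneg _
      linarith
    · have h3 : F r - F a - (r - a) * D ≤ U r - U a - (r - a) * D := by
        rw [hUa]; linarith
      have h5 : U r - U a - (r - a) * D ≤ |U r - U a - (r - a) * D| := le_abs_self _
      have h4 : (0:ℝ) ≤ |G r - G a - (r - a) * D| := abs_nonneg _
      linarith
  have hsum : (fun r => ‖(G r - G a - (r - a) • D)‖ + ‖(U r - U a - (r - a) • D)‖)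
      =o[nhds a] fun r => r - a := hG.norm_left.add hU.norm_left
  refine (Asymptotics.isBigO_iff.mpr ⟨1, ?_⟩).trans_isLittleO hsum
  filter_upwards [key] with r hr
  simpa using hr.trans (le_abs_self _)

/-- Gibbs' inequality -/
lemma gibbs {t : ℕ} (x y r : ℝ)
    (hxy1 : (∑ i : Fin t, Real.exp (x + ((i.1 + 1 : ℕ) : ℝ) * y) / dI (i.1 + 1)) = 1)
    (q : Fin t → ℝ) (hq0 : ∀ i, 0 ≤ q i) (hq1 : ∑ i, q i = 1)
    (hqr : ∑ i, ((i.1 + 1 : ℕ) : ℝ) * q i = r) :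
    x + r * y ≤ ∑ i, q i * Real.log (q i * dI (i.1 + 1)) := by
  set p : Fin t → ℝ := fun i => Real.exp (x + ((i.1 + 1 : ℕ) : ℝ) * y) / dI (i.1 + 1) with hp
  have hppos : ∀ i, 0 < p i := fun i => div_pos (Real.exp_pos _) (dI_pos _)
  have key : ∀ i : Fin t, q i - p i + q i * (x + ((i.1 + 1 : ℕ) : ℝ) * y) ≤
      q i * Real.log (q i * dI (i.1 + 1)) := by
    intro i
    have hd := dI_pos (i.1 + 1)
    rcases eq_or_lt_of_le (hq0 i) with h | h
    · rw [← h]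
      simp only [zero_sub, zero_mul, mul_zero, add_zero, zero_mul]
      linarith [hppos i]
    · have hlq : Real.log (q i * dI (i.1 + 1)) = Real.log (q i) + Real.log (dI (i.1 + 1)) :=
        Real.log_mul h.ne' hd.ne'
      have hlp : Real.log (p i) = (x + ((i.1 + 1 : ℕ) : ℝ) * y) - Real.log (dI (i.1 + 1)) := by
        rw [hp]
        rw [Real.log_div (Real.exp_pos _).ne' hd.ne', Real.log_exp]
      have hlog := Real.log_le_sub_one_of_pos (div_pos (hppos i) h)
      rw [Real.log_div (hppos i).ne' h.ne'] at hlog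
      have hmul : q i * (Real.log (p i) - Real.log (q i)) ≤ q i * (p i / q i - 1) :=
        mul_le_mul_of_nonneg_left hlog (hq0 i)
      have heq : q i * (p i / q i - 1) = p i - q i := by field_simp
      rw [mul_sub, heq] at hmul
      have h2 : q i * Real.log (p i) =
          q i * (x + ((i.1 + 1 : ℕ) : ℝ) * y) - q i * Real.log (dI (i.1 + 1)) := by
        rw [hlp]; ring
      rw [hlq, mul_add]
      linarith [hmul, h2]
  have hsum := Finset.sum_le_sum (fun i (_ : i ∈ Finset.univ) => key i)
  have e1 : ∑ i : Fin t, (q i - p i + q i * (x + ((i.1 + 1 : ℕ) : ℝ) * y)) =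
      ((∑ i, q i) - (∑ i, p i)) + (x * (∑ i, q i) + y * (∑ i, ((i.1 + 1 : ℕ) : ℝ) * q i)) := by
    rw [Finset.mul_sum, Finset.mul_sum, ← Finset.sum_add_distrib, ← Finset.sum_sub_distrib,
      ← Finset.sum_add_distrib]
    exact Finset.sum_congr rfl fun i _ => by ring
  rw [e1, hq1, hqr, ← hp, hxy1] at hsum
  linarith [hsum]

section PStar
variable {t : ℕ} (x y ρ : ℝ)

/-- the maximizer -/
noncomputable def pstar (x y : ℝ) (t : ℕ) : Fin t → ℝ :=
  fun i => Real.exp (x + ((i.1 + 1 : ℕ) : ℝ) * y) / dI (i.1 + 1)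

lemma pstar_pos (i : Fin t) : 0 < pstar x y t i := div_pos (Real.exp_pos _) (dI_pos _)

lemma pstar_sum (hxy1 : (∑ i : Fin t, Real.exp (x + ((i.1 + 1 : ℕ) : ℝ) * y) / dI (i.1 + 1)) = 1) :
    ∑ i, pstar x y t i = 1 := hxy1

lemma pstar_sum2 (hxy2 : (∑ i : Fin t, ((i.1 + 1 : ℕ) : ℝ) *
    Real.exp (x + ((i.1 + 1 : ℕ) : ℝ) * y) / dI (i.1 + 1)) = ρ) :
    ∑ i, ((i.1 + 1 : ℕ) : ℝ) * pstar x y t i = ρ := by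
  rw [← hxy2]
  exact Finset.sum_congr rfl fun i _ => (mul_div_assoc _ _ _).symm

lemma pstar_mem (hxy1 : (∑ i : Fin t, Real.exp (x + ((i.1 + 1 : ℕ) : ℝ) * y) / dI (i.1 + 1)) = 1)
    (hxy2 : (∑ i : Fin t, ((i.1 + 1 : ℕ) : ℝ) *
    Real.exp (x + ((i.1 + 1 : ℕ) : ℝ) * y) / dI (i.1 + 1)) = ρ) : pstar x y t ∈ Ptilde ρ t := by
  refine ⟨fun i => ⟨(pstar_pos x y i).le, ?_⟩, pstar_sum x y hxy1, pstar_sum2 x y ρ hxy2⟩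
  calc pstar x y t i ≤ ∑ j, pstar x y t j :=
        Finset.single_le_sum (fun j _ => (pstar_pos x y j).le) (Finset.mem_univ i)
    _ = 1 := hxy1

lemma pstar_log (i : Fin t) :
    Real.log (pstar x y t i * dI (i.1 + 1)) = x + ((i.1 + 1 : ℕ) : ℝ) * y := by
  unfold pstar
  rw [div_mul_cancel₀ _ (dI_pos (i.1 + 1)).ne', Real.log_exp]

lemma pstar_entropy
    (hxy1 : (∑ i : Fin t, Real.exp (x + ((i.1 + 1 : ℕ) : ℝ) * y) / dI (i.1 + 1)) = 1)
    (hxy2 : (∑ i : Fin t, ((i.1 + 1 : ℕ) : ℝ) *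
    Real.exp (x + ((i.1 + 1 : ℕ) : ℝ) * y) / dI (i.1 + 1)) = ρ) :
    ∑ i, pstar x y t i * Real.log (pstar x y t i * dI (i.1 + 1)) = x + ρ * y := by
  have e1 : ∀ i : Fin t, pstar x y t i * Real.log (pstar x y t i * dI (i.1 + 1)) =
      x * pstar x y t i + y * (((i.1 + 1 : ℕ) : ℝ) * pstar x y t i) := by
    intro i; rw [pstar_log]; ring
  rw [Finset.sum_congr rfl fun i _ => e1 i, Finset.sum_add_distrib, ← Finset.mul_sum,
    ← Finset.mul_sum, pstar_sum x y hxy1, pstar_sum2 x y ρ hxy2]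
  ring

/-- exact value of the sup (for every k'). -/
lemma Ltilde0_value
    (hxy1 : (∑ i : Fin t, Real.exp (x + ((i.1 + 1 : ℕ) : ℝ) * y) / dI (i.1 + 1)) = 1)
    (hxy2 : (∑ i : Fin t, ((i.1 + 1 : ℕ) : ℝ) *
    Real.exp (x + ((i.1 + 1 : ℕ) : ℝ) * y) / dI (i.1 + 1)) = ρ) (k' : ℝ) :
    Ltilde0 ρ k' t = ρ * Real.log (ρ * k') - Real.log k' - ρ + 1 - (x + ρ * y) := by
  have hub : ∀ L ∈ {L : ℝ | ∃ q ∈ Ptilde ρ t, L = Ltilde ρ k' q},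
      L ≤ ρ * Real.log (ρ * k') - Real.log k' - ρ + 1 - (x + ρ * y) := by
    rintro L ⟨q, ⟨hq01, hq1, hqρ⟩, rfl⟩
    have := gibbs x y ρ hxy1 q (fun i => (hq01 i).1) hq1 hqρ
    unfold Ltilde
    linarith
  have hval : Ltilde ρ k' (pstar x y t) =
      ρ * Real.log (ρ * k') - Real.log k' - ρ + 1 - (x + ρ * y) := by
    unfold Ltilde
    rw [pstar_entropy x y ρ hxy1 hxy2]
  have hmem : Ltilde ρ k' (pstar x y t) ∈ {L : ℝ | ∃ q ∈ Ptilde ρ t, L = Ltilde ρ k' q} :=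
    ⟨pstar x y t, pstar_mem x y ρ hxy1 hxy2, rfl⟩
  refine le_antisymm (csSup_le ⟨_, hmem⟩ hub) ?_
  rw [← hval]
  exact le_csSup ⟨_, hub⟩ hmem

end PStar

/-- For a fixed positive integer `t`, real `k > 0` and `1 < ρ < t`, letting
`x = x_t(ρ)` and `y = y_t(ρ)` be the (unique) reals with `Σ e^{x+iy}/d_i = 1` and
`Σ i e^{x+iy}/d_i = ρ`, the function `L̃₀(·,·,t)` satisfies
`∂L̃₀/∂k = (ρ−1)/k` and `∂L̃₀/∂ρ = log(ρk) − y_t(ρ)`. -/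
theorem Ltilde0_partialDerivs (t : ℕ) (ht : 0 < t) (k ρ : ℝ) (hk : 0 < k) (hρ1 : 1 < ρ)
    (hρt : ρ < (t : ℝ)) (x y : ℝ)
    (hxy1 : (∑ i : Fin t, Real.exp (x + ((i.1 + 1 : ℕ) : ℝ) * y) / dI (i.1 + 1)) = 1)
    (hxy2 : (∑ i : Fin t, ((i.1 + 1 : ℕ) : ℝ) *
        Real.exp (x + ((i.1 + 1 : ℕ) : ℝ) * y) / dI (i.1 + 1)) = ρ) :
    HasDerivAt (fun k' => Ltilde0 ρ k' t) ((ρ - 1) / k) k ∧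
    HasDerivAt (fun ρ' => Ltilde0 ρ' k t) (Real.log (ρ * k) - y) ρ := by
  have hρ0 : (0:ℝ) < ρ := zero_lt_one.trans hρ1
  constructor
  · -- part 1
    have hfun : (fun k' => Ltilde0 ρ k' t) =
        fun k' => ρ * Real.log (ρ * k') - Real.log k' - ρ + 1 - (x + ρ * y) :=
      funext (Ltilde0_value x y ρ hxy1 hxy2)
    have h1 : HasDerivAt (fun k' : ℝ => ρ * k') ρ k := by
      simpa using (hasDerivAt_id k).const_mul ρ
    have h2 : HasDerivAt (fun k' => Real.log (ρ * k')) ((ρ * k)⁻¹ * ρ) k :=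
      (Real.hasDerivAt_log (mul_pos hρ0 hk).ne').comp k h1
    have h3 := ((((h2.const_mul ρ).sub (Real.hasDerivAt_log hk.ne')).sub_const ρ).add_const
      (1:ℝ)).sub_const (x + ρ * y)
    rw [hfun]
    refine h3.congr_deriv ?_
    field_simp
  · -- part 2
    have ht2 : 2 ≤ t := by
      have h1 : (1:ℝ) < (t:ℝ) := hρ1.trans hρt
      have := Nat.one_lt_cast.mp h1
      omega
    set i0 : Fin t := ⟨0, ht⟩ with hi0
    set i1 : Fin t := ⟨t - 1, by omega⟩ with hi1
    have hne : i1 ≠ i0 := by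
      rw [hi1, hi0, Ne, Fin.mk.injEq]
      omega
    have hT : (0:ℝ) < (t:ℝ) - 1 := by
      have h1 : (1:ℝ) < (t:ℝ) := hρ1.trans hρt
      linarith
    set p : Fin t → ℝ := pstar x y t with hpdef
    have hppos : ∀ i, 0 < p i := fun i => pstar_pos x y i
    have hple : ∀ i, p i ≤ 1 := fun i => ((pstar_mem x y ρ hxy1 hxy2).1 i).2
    set w : Fin t → ℝ :=
      fun i => ((if i = i1 then (1:ℝ) else 0) - if i = i0 then 1 else 0) / ((t:ℝ) - 1) with hw
    have hsumw : ∀ c : Fin t → ℝ, ∑ i, c i * w i = (c i1 - c i0) / ((t:ℝ) - 1) := by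
      intro c
      calc ∑ i, c i * w i
          = (∑ i, (c i * (if i = i1 then (1:ℝ) else 0) - c i * (if i = i0 then 1 else 0))) /
            ((t:ℝ) - 1) := by
            rw [Finset.sum_div]
            exact Finset.sum_congr rfl fun i _ => by rw [hw]; ring
        _ = (c i1 - c i0) / ((t:ℝ) - 1) := by
            rw [Finset.sum_sub_distrib]
            simp [Finset.sum_ite_eq']
    have hcast1 : ((i1.1 + 1 : ℕ) : ℝ) = (t : ℝ) := by
      show ((t - 1 + 1 : ℕ) : ℝ) = (t : ℝ)
      rw [Nat.sub_add_cancel (by omega : 1 ≤ t)]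
    have hcast0 : ((i0.1 + 1 : ℕ) : ℝ) = 1 := by norm_num [hi0]
    set qf : ℝ → Fin t → ℝ := fun ε i => p i + ε * w i with hqf
    have hq_sum : ∀ ε, ∑ i, qf ε i = 1 := by
      intro ε
      have h1 : ∑ i, qf ε i = (∑ i, p i) + ∑ i, (fun _ : Fin t => ε) i * w i := by
        rw [← Finset.sum_add_distrib]
      rw [h1, hsumw, pstar_sum x y hxy1]
      simp
    have hq_sum2 : ∀ ε, ∑ i, ((i.1 + 1 : ℕ) : ℝ) * qf ε i = ρ + ε := by
      intro ε
      have h1 : ∑ i, ((i.1 + 1 : ℕ) : ℝ) * qf ε i =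
          (∑ i, ((i.1 + 1 : ℕ) : ℝ) * p i) +
            ∑ i, (fun i : Fin t => ((i.1 + 1 : ℕ) : ℝ) * ε) i * w i := by
        rw [← Finset.sum_add_distrib]
        exact Finset.sum_congr rfl fun i _ => by rw [hqf]; ring
      rw [h1, hsumw, pstar_sum2 x y ρ hxy2, hcast1, hcast0]
      field_simp
    -- the margin
    set m : ℝ := min (min (p i0) (1 - p i0)) (min (p i1) (1 - p i1)) with hm
    have hp01 : p i0 + p i1 ≤ 1 := by
      have hsub : ∑ i ∈ ({i1, i0} : Finset (Fin t)), p i ≤ ∑ i, p i :=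
        Finset.sum_le_sum_of_subset_of_nonneg (Finset.subset_univ _)
          (fun i _ _ => (hppos i).le)
      rw [Finset.sum_pair hne, pstar_sum x y hxy1] at hsub
      linarith
    have hm0 : 0 < m := by
      refine lt_min (lt_min (hppos i0) ?_) (lt_min (hppos i1) ?_)
      · linarith [hppos i1]
      · linarith [hppos i0]
    set δ : ℝ := ((t:ℝ) - 1) * m with hδ
    have hδ0 : 0 < δ := mul_pos hT hm0
    have hmem : ∀ ε : ℝ, |ε| < δ → qf ε ∈ Ptilde (ρ + ε) t := by
      intro ε hε
      have he : |ε / ((t:ℝ) - 1)| < m := by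
        rw [abs_div, abs_of_pos hT, div_lt_iff₀ hT]
        calc |ε| < δ := hε
          _ = m * ((t:ℝ) - 1) := by rw [hδ]; ring
      obtain ⟨he1, he2⟩ := abs_lt.mp he
      have hmle1 : m ≤ p i0 := (min_le_left _ _).trans (min_le_left _ _)
      have hmle2 : m ≤ 1 - p i0 := (min_le_left _ _).trans (min_le_right _ _)
      have hmle3 : m ≤ p i1 := (min_le_right _ _).trans (min_le_left _ _)
      have hmle4 : m ≤ 1 - p i1 := (min_le_right _ _).trans (min_le_right _ _)
      refine ⟨?_, hq_sum ε, hq_sum2 ε⟩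
      intro i
      by_cases h1 : i = i1
      · have hwv : w i1 = ((t:ℝ) - 1)⁻¹ := by
          rw [hw]
          norm_num [hne]
        have hq : qf ε i = p i1 + ε / ((t:ℝ) - 1) := by
          simp only [hqf, h1, hwv]
          ring
        rw [hq]
        constructor
        · linarith
        · linarith
      · by_cases h0 : i = i0
        · have hwv : w i0 = -((t:ℝ) - 1)⁻¹ := by
            rw [hw]
            norm_num [Ne.symm hne]
            ring
          have hq : qf ε i = p i0 - ε / ((t:ℝ) - 1) := by
            simp only [hqf, h0, hwv]
            ring
          rw [hq]
          constructor
          · linarith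
          · linarith
        · have hwv : w i = 0 := by
            rw [hw]
            norm_num [h1, h0]
          have hq : qf ε i = p i := by simp only [hqf, hwv]; ring
          rw [hq]
          exact ⟨(hppos i).le, hple i⟩
    -- entropy along the perturbation and its derivative
    set E : ℝ → ℝ := fun ε => ∑ i, qf ε i * Real.log (qf ε i * dI (i.1 + 1)) with hE
    have hEderiv : HasDerivAt E y 0 := by
      have hterm : ∀ i : Fin t,
          HasDerivAt (fun ε => qf ε i * Real.log (qf ε i * dI (i.1 + 1)))
            ((x + ((i.1 + 1 : ℕ) : ℝ) * y + 1) * w i) 0 := by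
        intro i
        have haff : HasDerivAt (fun ε : ℝ => p i + ε * w i) (w i) 0 :=
          (hasDerivAt_mul_const (w i)).const_add (p i)
        have hg' : HasDerivAt (fun v : ℝ => v * Real.log (v * dI (i.1 + 1)))
            (Real.log (p i * dI (i.1 + 1)) + 1) (p i + 0 * w i) := by
          simpa using hasDerivAt_xlog (dI_pos (i.1 + 1)) (hppos i)
        have hcomp := hg'.comp 0 haff
        have hval : (Real.log (p i * dI (i.1 + 1)) + 1) * w i =
            (x + ((i.1 + 1 : ℕ) : ℝ) * y + 1) * w i := by
          rw [hpdef, pstar_log]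
        rw [hval] at hcomp
        exact hcomp
      have := HasDerivAt.fun_sum (fun i (_ : i ∈ Finset.univ) => hterm i)
      have hds : ∑ i : Fin t, (x + ((i.1 + 1 : ℕ) : ℝ) * y + 1) * w i = y := by
        rw [hsumw (fun i => x + ((i.1 + 1 : ℕ) : ℝ) * y + 1), hcast1, hcast0]
        field_simp
        ring
      rw [hds] at this
      exact this
    -- bounds
    set U : ℝ → ℝ := fun r => r * Real.log (r * k) - Real.log k - r + 1 - (x + r * y) with hU
    set G : ℝ → ℝ := fun r => r * Real.log (r * k) - Real.log k - r + 1 - E (r - ρ) with hG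
    have hFU : ∀ᶠ r in nhds ρ, Ltilde0 r k t ≤ U r := by
      filter_upwards [Metric.ball_mem_nhds ρ hδ0] with r hr
      rw [Metric.mem_ball, Real.dist_eq] at hr
      have hmem' : qf (r - ρ) ∈ Ptilde r t := by
        have := hmem (r - ρ) hr
        rwa [add_sub_cancel] at this
      refine csSup_le ⟨Ltilde r k (qf (r - ρ)), qf (r - ρ), hmem', rfl⟩ ?_
      rintro L ⟨q, ⟨hq01, hq1, hqr⟩, rfl⟩
      have := gibbs x y r hxy1 q (fun i => (hq01 i).1) hq1 hqr
      unfold Ltilde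
      rw [hU]
      dsimp only
      linarith
    have hGF : ∀ᶠ r in nhds ρ, G r ≤ Ltilde0 r k t := by
      filter_upwards [Metric.ball_mem_nhds ρ hδ0] with r hr
      rw [Metric.mem_ball, Real.dist_eq] at hr
      have hmem' : qf (r - ρ) ∈ Ptilde r t := by
        have := hmem (r - ρ) hr
        rwa [add_sub_cancel] at this
      have hbdd : BddAbove {L : ℝ | ∃ q ∈ Ptilde r t, L = Ltilde r k q} := by
        refine ⟨U r, ?_⟩
        rintro L ⟨q, ⟨hq01, hq1, hqr⟩, rfl⟩
        have := gibbs x y r hxy1 q (fun i => (hq01 i).1) hq1 hqr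
        unfold Ltilde
        rw [hU]
        dsimp only
        linarith
      have : G r = Ltilde r k (qf (r - ρ)) := by
        rw [hG, hE]
        unfold Ltilde
        rfl
      exact this ▸ le_csSup hbdd ⟨qf (r - ρ), hmem', rfl⟩
    -- values at ρ
    have hE0 : E 0 = x + ρ * y := by
      rw [hE]
      dsimp only
      have : ∀ i : Fin t, qf 0 i = p i := fun i => by rw [hqf]; ring
      rw [Finset.sum_congr rfl fun i _ => by rw [this i]]
      exact pstar_entropy x y ρ hxy1 hxy2
    have hFρ : Ltilde0 ρ k t = ρ * Real.log (ρ * k) - Real.log k - ρ + 1 - (x + ρ * y) :=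
      Ltilde0_value x y ρ hxy1 hxy2 k
    have hGρ : G ρ = Ltilde0 ρ k t := by
      rw [hG]
      dsimp only
      rw [sub_self, hE0, hFρ]
    have hUρ : U ρ = Ltilde0 ρ k t := by rw [hU, hFρ]
    -- derivatives of G and U
    have hA : HasDerivAt (fun r : ℝ => r * Real.log (r * k)) (Real.log (ρ * k) + 1) ρ :=
      hasDerivAt_xlog hk hρ0
    have hB : HasDerivAt (fun r => E (r - ρ)) (y * 1) ρ := by
      have hsub : HasDerivAt (fun r : ℝ => r - ρ) 1 ρ := (hasDerivAt_id ρ).sub_const ρ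
      have hE' : HasDerivAt E y (ρ - ρ) := by rwa [sub_self]
      exact HasDerivAt.comp (h := fun r : ℝ => r - ρ) ρ hE' hsub
    have hGd : HasDerivAt G (Real.log (ρ * k) - y) ρ := by
      have := (((hA.sub_const (Real.log k)).sub (hasDerivAt_id ρ)).add_const (1:ℝ)).sub hB
      refine this.congr_deriv ?_
      ring
    have hUd : HasDerivAt U (Real.log (ρ * k) - y) ρ := by
      have hxy : HasDerivAt (fun r : ℝ => x + r * y) y ρ := (hasDerivAt_mul_const y).const_add x
      have := (((hA.sub_const (Real.log k)).sub (hasDerivAt_id ρ)).add_const (1:ℝ)).sub hxy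
      refine this.congr_deriv ?_
      ring
    exact hasDerivAt_of_squeeze hGd hUd hGρ hUρ hGF hFU
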